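/- If p is a random variable on [0,1] with density f that is mirror-conservative, i.e., f(a) ≤ f(1−a) for all a ∈ [0, 1/2], then for almost every x ∈ [0, 1/2], P(h(p) = 1 | g(p) = x) ≤ P(h(p) = −1 | g(p) = x); equivalently E[h(p) | g(p)] ≤ 0 almost surely. -/
import Mathlib


open MeasureTheory ProbabilityTheory
open scoped ENNReal NNReal

/-- The missing bit `h(p) = 2·1{p < 1/2} − 1`. -/
noncomputable def missingBit (x : ℝ) : ℝ := 2 * (if x < 1/2 then 1 else 0) - 1

/-- The masked p-value `g(p) = min(p, 1−p)`. -/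
noncomputable def maskedP (x : ℝ) : ℝ := min x (1 - x)

lemma measurable_missingBit : Measurable missingBit := by
  unfold missingBit
  exact (measurable_const.ite (measurableSet_lt measurable_id measurable_const)
    measurable_const).const_mul 2 |>.sub measurable_const

lemma measurable_maskedP : Measurable maskedP :=
  measurable_id.min (measurable_const.sub measurable_id)

lemma abs_missingBit_le (x : ℝ) : |missingBit x| ≤ 1 := by
  unfold missingBit; split <;> norm_num

/-- The reflection `x ↦ 1 - x` as a measurable equiv. -/
noncomputable def reflEquiv : ℝ ≃ᵐ ℝ where
  toFun x := 1 - x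
  invFun x := 1 - x
  left_inv x := by simp
  right_inv x := by simp
  measurable_toFun := measurable_const.sub measurable_id
  measurable_invFun := measurable_const.sub measurable_id

/-- Key computation: the integral of `missingBit` against the density over any
set pulled back from the masked value is nonpositive. -/
lemma setIntegral_missingBit_aux (f : ℝ → ℝ) (hf_meas : Measurable f)
    (hf_nonneg : ∀ x, 0 ≤ f x) (hfi : IntegrableOn f (Set.Icc (0:ℝ) 1))
    (hmc : ∀ a ∈ Set.Icc (0:ℝ) (1/2), f a ≤ f (1 - a))
    (t : Set ℝ) (ht : MeasurableSet t) :
    ∫ x in maskedP ⁻¹' t,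
      missingBit x ∂((volume.restrict (Set.Icc (0:ℝ) 1)).withDensity
        (fun x => ENNReal.ofReal (f x))) ≤ 0 := by
  set r : ℝ → ℝ := fun x => 1 - x with hr_def
  have hr_emb : MeasurableEmbedding r := reflEquiv.measurableEmbedding
  have hr_mp : MeasurePreserving r volume volume :=
    Measure.measurePreserving_sub_left volume 1
  have hA : MeasurableSet (maskedP ⁻¹' t) := measurable_maskedP ht
  set A : Set ℝ := maskedP ⁻¹' t with hA_def
  have hdens : (fun x : ℝ => ENNReal.ofReal (f x))
      = (fun x : ℝ => ((f x).toNNReal : ℝ≥0∞)) := rfl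
  rw [hdens, restrict_withDensity hA _,
    integral_withDensity_eq_integral_smul (hf_meas.real_toNNReal) _]
  have hsmul : ∀ x : ℝ, (f x).toNNReal • missingBit x = f x * missingBit x := fun x => by
    rw [NNReal.smul_def, Real.coe_toNNReal _ (hf_nonneg x), smul_eq_mul]
  simp_rw [hsmul]
  rw [Measure.restrict_restrict hA]
  -- split the domain
  have hsplit : A ∩ Set.Icc (0:ℝ) 1
      = (A ∩ Set.Ico 0 (1/2)) ∪ (A ∩ Set.Icc (1/2) 1) := by
    rw [← Set.inter_union_distrib_left, Set.Ico_union_Icc_eq_Icc (by norm_num) (by norm_num)]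
  have hintOn : IntegrableOn (fun x => f x * missingBit x) (A ∩ Set.Icc 0 1) := by
    refine Integrable.mono' (hfi.mono_set Set.inter_subset_right)
      ((hf_meas.mul measurable_missingBit).aestronglyMeasurable.restrict) ?_
    refine Filter.Eventually.of_forall fun x => ?_
    rw [Real.norm_eq_abs, abs_mul, abs_of_nonneg (hf_nonneg x)]
    calc f x * |missingBit x| ≤ f x * 1 :=
          mul_le_mul_of_nonneg_left (abs_missingBit_le x) (hf_nonneg x)
      _ = f x := mul_one _
  have hmeas1 : MeasurableSet (A ∩ Set.Ico (0:ℝ) (1/2)) := hA.inter measurableSet_Ico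
  have hmeas2 : MeasurableSet (A ∩ Set.Icc (1/2:ℝ) 1) := hA.inter measurableSet_Icc
  have hd : Disjoint (A ∩ Set.Ico (0:ℝ) (1/2)) (A ∩ Set.Icc (1/2) 1) := by
    refine Set.disjoint_left.2 fun x hx1 hx2 => ?_
    exact absurd hx2.2.1 (not_le.2 hx1.2.2)
  rw [hsplit, setIntegral_union hd hmeas2
    (hintOn.mono_set (hsplit ▸ Set.subset_union_left))
    (hintOn.mono_set (hsplit ▸ Set.subset_union_right))]
  -- first piece: missingBit = 1
  have h1 : ∫ x in A ∩ Set.Ico (0:ℝ) (1/2), f x * missingBit x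
      = ∫ x in A ∩ Set.Ico (0:ℝ) (1/2), f x := by
    refine setIntegral_congr_fun hmeas1 fun x hx => ?_
    have : missingBit x = 1 := by unfold missingBit; rw [if_pos hx.2.2]; ring
    rw [this, mul_one]
  -- second piece: missingBit = -1
  have h2 : ∫ x in A ∩ Set.Icc (1/2:ℝ) 1, f x * missingBit x
      = - ∫ x in A ∩ Set.Icc (1/2:ℝ) 1, f x := by
    rw [← integral_neg]
    refine setIntegral_congr_fun hmeas2 fun x hx => ?_
    have : missingBit x = -1 := by
      unfold missingBit; rw [if_neg (not_lt.2 hx.2.1)]; ring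
    rw [this]; ring
  rw [h1, h2]
  -- identify the sets
  have hset1 : A ∩ Set.Ico (0:ℝ) (1/2) = t ∩ Set.Ico 0 (1/2) := by
    ext x
    simp only [Set.mem_inter_iff, Set.mem_preimage, hA_def, and_congr_left_iff]
    intro hx
    have : maskedP x = x := min_eq_left (by simp only [Set.mem_Ico] at hx; linarith [hx.2])
    rw [this]
  have hset2 : A ∩ Set.Icc (1/2:ℝ) 1 = r ⁻¹' (t ∩ Set.Icc 0 (1/2)) := by
    ext x
    simp only [Set.mem_inter_iff, Set.mem_preimage, hA_def, hr_def, Set.mem_Icc]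
    constructor
    · rintro ⟨hxt, hx1, hx2⟩
      have : maskedP x = 1 - x := min_eq_right (by linarith : 1 - x ≤ x)
      rw [this] at hxt
      exact ⟨hxt, by linarith, by linarith⟩
    · rintro ⟨hxt, hx1, hx2⟩
      have : maskedP x = 1 - x := min_eq_right (by linarith : 1 - x ≤ x)
      exact ⟨by rw [this]; exact hxt, by linarith, by linarith⟩
  rw [hset1, hset2]
  -- reflect the second integral
  have hrefl : ∫ x in r ⁻¹' (t ∩ Set.Icc (0:ℝ) (1/2)), f x
      = ∫ y in t ∩ Set.Icc (0:ℝ) (1/2), f (1 - y) := by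
    rw [← hr_mp.setIntegral_preimage_emb hr_emb (fun y => f (1 - y)) _]
    refine setIntegral_congr_fun ((measurable_const.sub measurable_id)
      (ht.inter measurableSet_Icc)) fun x _ => ?_
    simp [hr_def, sub_sub_cancel]
  rw [hrefl]
  -- replace Icc by Ico (they differ by a null set)
  have hae : (t ∩ Set.Icc (0:ℝ) (1/2) : Set ℝ) =ᵐ[volume] (t ∩ Set.Ico (0:ℝ) (1/2) : Set ℝ) :=
    ae_eq_set_inter (Filter.EventuallyEq.refl _ _) Ico_ae_eq_Icc.symm
  have hrw : ∫ y in t ∩ Set.Icc (0:ℝ) (1/2), f (1 - y)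
      = ∫ y in t ∩ Set.Ico (0:ℝ) (1/2), f (1 - y) := by
    rw [Measure.restrict_congr_set hae]
  rw [hrw]
  -- compare the two integrals over the same set
  have hS : MeasurableSet (t ∩ Set.Ico (0:ℝ) (1/2)) := ht.inter measurableSet_Ico
  have hint1 : IntegrableOn f (t ∩ Set.Ico (0:ℝ) (1/2)) :=
    hfi.mono_set fun x hx => ⟨hx.2.1, by linarith [hx.2.2]⟩
  have hint2 : IntegrableOn (fun y => f (1 - y)) (t ∩ Set.Ico (0:ℝ) (1/2)) := by
    have h0 : IntegrableOn f (r ⁻¹' (t ∩ Set.Ico (0:ℝ) (1/2))) := by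
      refine hfi.mono_set fun x hx => ?_
      obtain ⟨-, h1, h2⟩ := hx
      simp only [hr_def] at h1 h2
      exact ⟨by linarith, by linarith⟩
    have hcomp : ((fun y => f (1 - y)) ∘ r) = f := by
      funext x; simp [hr_def, sub_sub_cancel]
    have h0' : Integrable ((fun y => f (1 - y)) ∘ r)
        (volume.restrict (r ⁻¹' (t ∩ Set.Ico (0:ℝ) (1/2)))) := by
      rw [hcomp]; exact h0
    exact ((hr_mp.restrict_preimage hS).integrable_comp_emb hr_emb).1 h0'
  have hcmp : ∫ y in t ∩ Set.Ico (0:ℝ) (1/2), f y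
      ≤ ∫ y in t ∩ Set.Ico (0:ℝ) (1/2), f (1 - y) :=
    setIntegral_mono_on hint1 hint2 hS fun x hx => hmc x ⟨hx.2.1, hx.2.2.le⟩
  linarith

/-- If `p` has a mirror-conservative density `f` on `[0,1]` (i.e. `f(a) ≤ f(1−a)` for
`a ∈ [0,1/2]`), then `E[h(p) | g(p)] ≤ 0` almost surely. -/
theorem condExp_missingBit_nonpos_of_mirrorConservative {Ω : Type*} [MeasurableSpace Ω]
    (P : Measure Ω) [IsProbabilityMeasure P] (p : Ω → ℝ) (hpmeas : Measurable p)
    (f : ℝ → ℝ) (hf_meas : Measurable f) (hf_nonneg : ∀ x, 0 ≤ f x)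
    (hp : Measure.map p P
      = (volume.restrict (Set.Icc (0:ℝ) 1)).withDensity (fun x => ENNReal.ofReal (f x)))
    (hmc : ∀ a ∈ Set.Icc (0:ℝ) (1/2), f a ≤ f (1 - a)) :
    ∀ᵐ ω ∂P,
      (P[(fun ω' => missingBit (p ω')) |
          MeasurableSpace.comap (fun ω' => maskedP (p ω')) inferInstance]) ω ≤ 0 := by
  have hm : MeasurableSpace.comap (fun ω' => maskedP (p ω')) inferInstance
      ≤ (inferInstance : MeasurableSpace Ω) :=
    Measurable.comap_le (measurable_maskedP.comp hpmeas)
  -- integrability of f on [0,1]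
  have hfi : IntegrableOn f (Set.Icc (0:ℝ) 1) := by
    refine ⟨hf_meas.aestronglyMeasurable, ?_⟩
    rw [HasFiniteIntegral]
    simp_rw [fun x => Real.enorm_eq_ofReal (hf_nonneg x)]
    have : ∫⁻ x, ENNReal.ofReal (f x) ∂(volume.restrict (Set.Icc (0:ℝ) 1))
        = ((volume.restrict (Set.Icc (0:ℝ) 1)).withDensity
            (fun x => ENNReal.ofReal (f x))) Set.univ := by
      rw [withDensity_apply _ MeasurableSet.univ, Measure.restrict_univ]
    rw [this, ← hp, Measure.map_apply hpmeas MeasurableSet.univ]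
    simp
  -- integrability of missingBit ∘ p
  have hint : Integrable (fun ω => missingBit (p ω)) P := by
    refine Integrable.mono' (integrable_const (1:ℝ))
      ((measurable_missingBit.comp hpmeas).aestronglyMeasurable) ?_
    exact Filter.Eventually.of_forall fun ω => by
      simpa using abs_missingBit_le (p ω)
  -- key: set integrals over m-measurable sets are nonpositive
  have hkey : ∀ s : Set Ω,
      MeasurableSet[MeasurableSpace.comap (fun ω' => maskedP (p ω')) inferInstance] s →
      ∫ ω in s, missingBit (p ω) ∂P ≤ 0 := by
    rintro s ⟨t, ht, rfl⟩
    have hA : MeasurableSet (maskedP ⁻¹' t) := measurable_maskedP ht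
    have hpre : (fun ω' => maskedP (p ω')) ⁻¹' t = p ⁻¹' (maskedP ⁻¹' t) := rfl
    rw [hpre, ← setIntegral_map hA
      (measurable_missingBit.aestronglyMeasurable) hpmeas.aemeasurable, hp]
    exact setIntegral_missingBit_aux f hf_meas hf_nonneg hfi hmc t ht
  -- conclude via the a.e. characterization of the conditional expectation
  haveI : IsFiniteMeasure (P.trim hm) := isFiniteMeasure_trim hm
  have htrim : (P[(fun ω' => missingBit (p ω')) |
      MeasurableSpace.comap (fun ω' => maskedP (p ω')) inferInstance]) ≤ᵐ[P.trim hm] 0 := by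
    refine ae_le_of_forall_setIntegral_le
      (Integrable.trim hm integrable_condExp stronglyMeasurable_condExp)
      (integrable_zero _ _ _) fun s hs _ => ?_
    rw [← setIntegral_trim hm stronglyMeasurable_condExp hs,
      setIntegral_condExp hm hint hs]
    simpa using hkey s hs
  have := ae_le_of_ae_le_trim htrim
  filter_upwards [this] with ω hω using hω
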